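/- Let f ∈ Ω and let z ∈ ℂ with 0 < |z| < 4/5. Then f(z) ≠ 0 and, writing z·f'(z)/f(z) = u + i·v with u, v ∈ ℝ, one has (9u² − 18u + 9v² + 5)² − 16(9u² − 6u + 9v² + 1) < 0; i.e., z·f'(z)/f(z) lies in the interior of the cardioid bounding the region associated with the class S*_C. (That is, the S*_C-radius for the class Ω is 4/5.) -/

import Mathlib

open Complex Metric

/-- The open unit disc in `ℂ`. -/
def unitDisc : Set ℂ := Metric.ball 0 1

/-- `f ∈ 𝒜ₙ`: `f` is analytic on the unit disc with power series
`f(z) = z + ∑_{k=n+1}^∞ a_k z^k`. -/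
def MemA (n : ℕ) (f : ℂ → ℂ) : Prop :=
  DifferentiableOn ℂ f unitDisc ∧
    ∃ a : ℕ → ℂ, ∀ z ∈ unitDisc, f z = z + ∑' k : ℕ, a k * z ^ (n + 1 + k)

/-- `f ∈ Ωₙ`: `f ∈ 𝒜ₙ` and `|z f'(z) - f(z)| < 1/2` on the unit disc. -/
def MemOmega (n : ℕ) (f : ℂ → ℂ) : Prop :=
  MemA n f ∧ ∀ z ∈ unitDisc, ‖z * deriv f z - f z‖ < 1 / 2


/-!
Put `g z = z * f' z - f z`. Then `g 0 = 0` and `g' = z f''` vanishes at `0`, so Schwarz's lemma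
applied twice gives `‖g z‖ ≤ ‖z‖² / 2`. Since `(f z / z)' = g z / z²`, the mean value inequality
gives `‖f z / z - 1‖ ≤ ‖z‖ / 2`, hence `‖f z‖ ≥ ‖z‖ (1 - ‖z‖ / 2)` and
`‖z f' z / f z - 1‖ = ‖g z‖ / ‖f z‖ ≤ ‖z‖ / (2 - ‖z‖) < 2 / 3` for `‖z‖ < 4 / 5`.
The disc `‖w - 1‖ < 2 / 3` lies inside the cardioid.
-/

open Set Filter Asymptotics Topology

lemma continuousAt_tsum_mul_pow_of_summable {a : ℕ → ℂ} {w : ℂ} (hw : w ≠ 0)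
    (hsum : Summable fun k => a k * w ^ k) :
    ContinuousAt (fun x => ∑' k, a k * x ^ k) 0 := by
  have hcont : ContinuousOn (fun x => ∑' k, a k * x ^ k) (closedBall 0 ‖w‖) := by
    refine continuousOn_tsum (fun k => (continuous_const.mul (continuous_pow k)).continuousOn)
      (summable_norm_iff.2 hsum) fun k x hx => ?_
    rw [norm_mul, norm_mul, norm_pow, norm_pow]
    gcongr
    simpa using hx
  exact hcont.continuousAt (closedBall_mem_nhds _ (norm_pos_iff.2 hw))

lemma tsum_mul_pow_isBigO_one (a : ℕ → ℂ) :
    (fun x => ∑' k, a k * x ^ k) =O[𝓝 0] fun _ => (1 : ℂ) := by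
  by_cases h : ∃ w ≠ 0, Summable fun k => a k * w ^ k
  · obtain ⟨w, hw, hsum⟩ := h
    exact (continuousAt_tsum_mul_pow_of_summable hw hsum).tendsto.isBigO_one ℂ
  · -- the series diverges at every `x ≠ 0`, so its `tsum` is the junk value `0` there
    push Not at h
    refine IsBigO.of_bound ‖a 0‖ (Eventually.of_forall fun x => ?_)
    rcases eq_or_ne x 0 with rfl | hx
    · rw [tsum_eq_single 0 fun k hk => by simp [hk]]
      simp
    · simp [tsum_eq_zero_of_not_summable (h x hx)]

namespace MemA

variable {n : ℕ} {f : ℂ → ℂ}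

lemma apply_zero (hf : MemA n f) : f 0 = 0 := by
  obtain ⟨-, a, ha⟩ := hf
  simpa using ha 0 (by simp [unitDisc])

lemma hasDerivAt_zero (hf : MemA n f) (hn : n ≠ 0) : HasDerivAt f 1 0 := by
  obtain ⟨-, a, ha⟩ := hf
  have heq : f =ᶠ[𝓝 0] fun x => x + x ^ (n + 1) * ∑' k, a k * x ^ k := by
    filter_upwards [ball_mem_nhds (0 : ℂ) one_pos] with x hx
    rw [ha x hx, ← tsum_mul_left]
    congr 1
    exact tsum_congr fun k => by ring
  have hrem : HasDerivAt (fun x => x ^ (n + 1) * ∑' k, a k * x ^ k) 0 0 := by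
    rw [hasDerivAt_iff_isLittleO]
    simpa using (isLittleO_pow_id (by omega)).mul_isBigO (tsum_mul_pow_isBigO_one a)
  simpa using ((hasDerivAt_id 0).add hrem).congr_of_eventuallyEq heq

lemma eq_mul_dslope (hf : MemA n f) (z : ℂ) : f z = z * dslope f 0 z := by
  simpa [hf.apply_zero] using (sub_smul_dslope f 0 z).symm

end MemA

lemma norm_le_div_sq_mul_sq_of_mapsTo_ball {g : ℂ → ℂ} {R M : ℝ} {z : ℂ}
    (hd : DifferentiableOn ℂ g (ball 0 R)) (hg0 : g 0 = 0) (hg'0 : deriv g 0 = 0)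
    (hmaps : MapsTo g (ball 0 R) (closedBall 0 M)) (hz : z ∈ ball 0 R) :
    ‖g z‖ ≤ M / R ^ 2 * ‖z‖ ^ 2 := by
  have hR : 0 < R := pos_of_mem_ball hz
  have hd' : DifferentiableOn ℂ (dslope g 0) (ball 0 R) :=
    (differentiableOn_dslope (ball_mem_nhds 0 hR)).2 hd
  have hmaps' : MapsTo (dslope g 0) (ball 0 R) (closedBall (dslope g 0 0) (M / R)) := by
    rw [dslope_same, hg'0]
    exact fun x hx => mem_closedBall_zero_iff.2
      (Complex.norm_dslope_le_div_of_mapsTo_ball hd (by rwa [hg0]) hx)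
  have h := Complex.norm_dslope_le_div_of_mapsTo_ball hd' hmaps' hz
  rcases eq_or_ne z 0 with rfl | hz0
  · simp [hg0]
  rw [dslope_of_ne _ hz0, slope_def_field, dslope_of_ne _ hz0, slope_def_field, dslope_same,
    hg'0, hg0] at h
  have hzpos : 0 < ‖z‖ := norm_pos_iff.2 hz0
  simp only [sub_zero, norm_div] at h
  rw [div_div, div_le_iff₀ (by positivity)] at h
  calc ‖g z‖ ≤ M / R / R * (‖z‖ * ‖z‖) := h
    _ = M / R ^ 2 * ‖z‖ ^ 2 := by ring

lemma mem_cardioid_of_norm_sub_one_lt {w : ℂ} (hw : ‖w - 1‖ < 2 / 3) :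
    (9 * w.re ^ 2 - 18 * w.re + 9 * w.im ^ 2 + 5) ^ 2 -
      16 * (9 * w.re ^ 2 - 6 * w.re + 9 * w.im ^ 2 + 1) < 0 := by
  set r := ‖w - 1‖
  have hr : (w.re - 1) ^ 2 + w.im ^ 2 = r ^ 2 := by
    rw [Complex.sq_norm, Complex.normSq_apply]
    simp only [Complex.sub_re, Complex.one_re, Complex.sub_im, Complex.one_im, sub_zero]
    ring
  have hre : -r ≤ w.re - 1 := by
    nlinarith [sq_nonneg w.im, sq_nonneg (w.re - 1 + r), norm_nonneg (w - 1)]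
  have hA : 9 * w.re ^ 2 - 18 * w.re + 9 * w.im ^ 2 + 5 = (3 * r - 2) * (3 * r + 2) := by
    linear_combination 9 * hr
  have hB : 9 * w.re ^ 2 - 6 * w.re + 9 * w.im ^ 2 + 1 =
      (3 * r - 2) ^ 2 + 12 * (w.re - 1 + r) := by
    linear_combination 9 * hr
  -- `(3r - 2)² > 0` and `3r + 2 < 4`: the cusp `1/3` of the cardioid is the point nearest to `1`
  rw [hA, hB]
  have hpos : 0 < (3 * r - 2) ^ 2 := by nlinarith
  have hsmall : (3 * r + 2) ^ 2 < 16 := by nlinarith [norm_nonneg (w - 1)]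
  nlinarith [mul_lt_mul_of_pos_left hsmall hpos]

namespace MemOmega

variable {n : ℕ} {f : ℂ → ℂ}

lemma analyticOnNhd (hf : MemOmega n f) : AnalyticOnNhd ℂ f unitDisc :=
  hf.1.1.analyticOnNhd isOpen_ball

lemma norm_mul_deriv_sub_le (hf : MemOmega n f) {z : ℂ} (hz : z ∈ unitDisc) :
    ‖z * deriv f z - f z‖ ≤ ‖z‖ ^ 2 / 2 := by
  have hfa := hf.analyticOnNhd
  have h0 : (0 : ℂ) ∈ unitDisc := mem_ball_self one_pos
  have hg : AnalyticOnNhd ℂ (fun x => x * deriv f x - f x) unitDisc :=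
    (analyticOnNhd_id.mul hfa.deriv).sub hfa
  -- `(z f' - f)' = z f''` vanishes at `0`
  have hg' : HasDerivAt (fun x => x * deriv f x - f x)
      (1 * deriv f 0 + 0 * deriv (deriv f) 0 - deriv f 0) 0 :=
    ((hasDerivAt_id 0).mul (hfa.deriv 0 h0).differentiableAt.hasDerivAt).sub
      (hfa 0 h0).differentiableAt.hasDerivAt
  have := norm_le_div_sq_mul_sq_of_mapsTo_ball hg.differentiableOn
    (by simp [hf.1.apply_zero]) (by rw [hg'.deriv]; ring)
    (fun x hx => mem_closedBall_zero_iff.2 (hf.2 x hx).le) hz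
  linarith

lemma differentiableOn_dslope (hf : MemOmega n f) : DifferentiableOn ℂ (dslope f 0) unitDisc :=
  (Complex.differentiableOn_dslope (ball_mem_nhds 0 one_pos)).2 hf.1.1

lemma norm_deriv_dslope_le (hf : MemOmega n f) {z : ℂ} (hz : z ∈ unitDisc) :
    ‖deriv (dslope f 0) z‖ ≤ 1 / 2 := by
  have hfa := hf.analyticOnNhd
  have hne : ∀ x ∈ unitDisc, x ≠ 0 → ‖deriv (dslope f 0) x‖ ≤ 1 / 2 := by
    intro x hx hx0
    have heq : dslope f 0 =ᶠ[𝓝 x] fun y => f y / y := by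
      filter_upwards [isOpen_ne.mem_nhds hx0] with y hy
      rw [dslope_of_ne _ hy, slope_def_field, hf.1.apply_zero, sub_zero, sub_zero]
    have hd : HasDerivAt (fun y => f y / y) ((deriv f x * x - f x * 1) / x ^ 2) x :=
      (hfa x hx).differentiableAt.hasDerivAt.div (hasDerivAt_id x) hx0
    have hxpos : 0 < ‖x‖ := norm_pos_iff.2 hx0
    have := hf.norm_mul_deriv_sub_le hx
    rw [heq.deriv_eq, hd.deriv, mul_one, norm_div, norm_pow, div_le_iff₀ (by positivity),
      mul_comm (deriv f x)]
    linarith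
  rcases eq_or_ne z 0 with rfl | hz0
  · have hcont : ContinuousAt (deriv (dslope f 0)) 0 :=
      (hf.differentiableOn_dslope.analyticOnNhd isOpen_ball).deriv 0
        (mem_ball_self one_pos) |>.continuousAt
    refine le_of_tendsto (hcont.norm.tendsto.mono_left (nhdsWithin_le_nhds (s := {0}ᶜ))) ?_
    filter_upwards [inter_mem_nhdsWithin {(0 : ℂ)}ᶜ (ball_mem_nhds (0 : ℂ) one_pos),
      self_mem_nhdsWithin] with y hy hy0
    exact hne y hy.2 hy0
  · exact hne z hz hz0

lemma norm_dslope_sub_one_le (hf : MemOmega n f) (hn : n ≠ 0) {z : ℂ} (hz : z ∈ unitDisc) :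
    ‖dslope f 0 z - 1‖ ≤ ‖z‖ / 2 := by
  have h := (convex_ball (0 : ℂ) 1).norm_image_sub_le_of_norm_deriv_le
    (fun x hx => hf.differentiableOn_dslope.differentiableAt (isOpen_ball.mem_nhds hx))
    (fun x hx => hf.norm_deriv_dslope_le hx) (mem_ball_self one_pos) hz
  rwa [dslope_same, (hf.1.hasDerivAt_zero hn).deriv, sub_zero, one_div_mul_eq_div] at h

lemma mul_one_sub_le_norm (hf : MemOmega n f) (hn : n ≠ 0) {z : ℂ} (hz : z ∈ unitDisc) :
    ‖z‖ * (1 - ‖z‖ / 2) ≤ ‖f z‖ := by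
  rw [hf.1.eq_mul_dslope z, norm_mul]
  gcongr
  have h := norm_sub_norm_le (1 : ℂ) (dslope f 0 z)
  rw [norm_sub_rev, norm_one] at h
  linarith [hf.norm_dslope_sub_one_le hn hz]

lemma apply_ne_zero (hf : MemOmega n f) (hn : n ≠ 0) {z : ℂ} (hz : z ∈ unitDisc)
    (hz0 : z ≠ 0) : f z ≠ 0 := by
  have h1 : ‖z‖ < 1 := mem_ball_zero_iff.1 hz
  have h0 : 0 < ‖z‖ := norm_pos_iff.2 hz0
  exact norm_pos_iff.1 <| (by nlinarith : 0 < ‖z‖ * (1 - ‖z‖ / 2)).trans_le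
    (hf.mul_one_sub_le_norm hn hz)

lemma norm_mul_deriv_div_sub_one_le (hf : MemOmega n f) (hn : n ≠ 0) {z : ℂ}
    (hz : z ∈ unitDisc) (hz0 : z ≠ 0) :
    ‖z * deriv f z / f z - 1‖ ≤ ‖z‖ / (2 - ‖z‖) := by
  have h1 : ‖z‖ < 1 := mem_ball_zero_iff.1 hz
  have h0 : 0 < ‖z‖ := norm_pos_iff.2 hz0
  rw [div_sub_one (hf.apply_ne_zero hn hz hz0), norm_div]
  calc ‖z * deriv f z - f z‖ / ‖f z‖ ≤ (‖z‖ ^ 2 / 2) / (‖z‖ * (1 - ‖z‖ / 2)) :=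
        div_le_div₀ (by positivity) (hf.norm_mul_deriv_sub_le hz) (by nlinarith)
          (hf.mul_one_sub_le_norm hn hz)
    _ = ‖z‖ / (2 - ‖z‖) := by field_simp

end MemOmega

theorem stmt_18 (f : ℂ → ℂ) (hf : MemOmega 1 f) (z : ℂ) (hz0 : 0 < ‖z‖) (hz : ‖z‖ < 4 / 5) :
    f z ≠ 0 ∧
      (9 * (z * deriv f z / f z).re ^ 2 - 18 * (z * deriv f z / f z).re +
          9 * (z * deriv f z / f z).im ^ 2 + 5) ^ 2 -
        16 * (9 * (z * deriv f z / f z).re ^ 2 - 6 * (z * deriv f z / f z).re +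
          9 * (z * deriv f z / f z).im ^ 2 + 1) < 0 := by
  have hzD : z ∈ unitDisc := mem_ball_zero_iff.2 (hz.trans (by norm_num))
  have hz0' : z ≠ 0 := norm_pos_iff.1 hz0
  refine ⟨hf.apply_ne_zero one_ne_zero hzD hz0', mem_cardioid_of_norm_sub_one_lt ?_⟩
  calc ‖z * deriv f z / f z - 1‖ ≤ ‖z‖ / (2 - ‖z‖) :=
        hf.norm_mul_deriv_div_sub_one_le one_ne_zero hzD hz0'
    _ < 2 / 3 := by
        rw [div_lt_iff₀ (by linarith)]
        linarith
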